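/- For any tree T with out-degree at most (k+1) whose nodes are labelled by characters from {c₁,…,c_k, ε}, if for each character c ∈ {c₁,…,c_k} the tree T contains at least n nodes labelled c, then for each such c we have score_c(T) ≥ log_{k+1}(n), where score_c is the score computed treating c as the only output character (all other labels replaced by ε). -/

import Mathlib

inductive LTree (α : Type) : Type
  | node : Option α → List (LTree α) → LTree α

namespace LTree

variable {α : Type} [DecidableEq α]

/-- Number of nodes labelled `c`. -/
def countc (c : α) : LTree α → ℕ
  | .node b ts =>
    (if b = some c then 1 else 0) + (ts.attach.map (fun t => countc c t.1)).sum
decreasing_by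
  have := List.sizeOf_lt_of_mem t.2; simp; omega

/-- The score of a tree with respect to output character `c`. -/
def score (c : α) : LTree α → ℕ
  | .node _ [] => 0
  | .node b [t] => score c t + (if b = some c then 1 else 0)
  | .node _ ts =>
    (ts.attach.map (fun t =>
      score c t.1 +
        (if 0 < (ts.attach.map (fun t => score c t.1)).sum - score c t.1
         then 1 else 0))).foldr max 0
decreasing_by
  all_goals first
    | (have := List.sizeOf_lt_of_mem t.2; simp; omega)
    | (simp; omega)

/-- Out-degree at most `d`. -/
inductive DegLE (d : ℕ) : LTree α → Prop
  | node : ∀ b ts, ts.length ≤ d → (∀ t ∈ ts, DegLE d t) → DegLE d (.node b ts)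

/-- Only nodes with exactly one child may carry a non-ε label. -/
inductive BranchEps : LTree α → Prop
  | node : ∀ (b : Option α) ts, (ts.length ≠ 1 → b = none) →
      (∀ t ∈ ts, BranchEps t) → BranchEps (.node b ts)

/-- `Subtree t' t`: `t'` is the tree rooted at some node of `t`. -/
inductive Subtree : LTree α → LTree α → Prop
  | refl : ∀ t, Subtree t t
  | child : ∀ {t' t : LTree α} (b : Option α) (ts : List (LTree α)),
      t ∈ ts → Subtree t' t → Subtree t' (.node b ts)

/-- Every root-to-leaf branch has at most `h` edges. -/
inductive HeightLE : ℕ → LTree α → Prop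
  | leaf : ∀ h b, HeightLE h (.node b [])
  | node : ∀ h b ts, (∀ t ∈ ts, HeightLE h t) → HeightLE (h + 1) (.node b ts)

end LTree

/-!
Write `d = k + 1`. By induction on the tree, `countc c T < d ^ score c T`. A unary node labelled
`c` raises both the count and the score by one, which `d ≥ 2` absorbs. At a branching node with
child scores `sᵢ` (at most `d` of them), the children contribute at most `∑ (d ^ sᵢ - 1)`. If some
`sᵢ` is at least `∑ sⱼ`, superadditivity of `s ↦ d ^ s - 1` bounds this by `d ^ sᵢ - 1`; otherwise
every child earns the bonus, so each `sᵢ` is at most `score - 1` and the sum is at most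
`d * (d ^ (score - 1) - 1) < d ^ score`. Taking `log_d` of `n ≤ countc c T < d ^ score c T` gives
the theorem.
-/

namespace LTree

variable {α : Type} [DecidableEq α]

def branchScore (ss : List ℕ) : ℕ :=
  (ss.map fun s => s + if 0 < ss.sum - s then 1 else 0).foldr max 0

theorem le_branchScore {ss : List ℕ} {s : ℕ} (hs : s ∈ ss) :
    s + (if 0 < ss.sum - s then 1 else 0) ≤ branchScore ss :=
  List.le_max_of_le' 0 (List.mem_map_of_mem hs) le_rfl

theorem sum_map_pow_sub_one_le {d : ℕ} (hd : 0 < d) (ss : List ℕ) :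
    (ss.map fun s => d ^ s - 1).sum ≤ d ^ ss.sum - 1 := by
  induction ss with
  | nil => simp
  | cons a ss ih =>
    have ha := Nat.one_le_pow a d hd
    have hss := Nat.one_le_pow ss.sum d hd
    simp only [List.map_cons, List.sum_cons, pow_add]
    zify [ha, hss, Nat.one_le_pow _ _ hd, one_le_mul ha hss] at ih ⊢
    nlinarith

theorem sum_map_pow_sub_one_le_branchScore {d : ℕ} (hd : 0 < d) {ss : List ℕ}
    (hlen : ss.length ≤ d) :
    (ss.map fun s => d ^ s - 1).sum ≤ d ^ branchScore ss - 1 := by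
  by_cases hmax : ∃ s ∈ ss, ss.sum ≤ s
  · obtain ⟨s, hs, hsum⟩ := hmax
    calc (ss.map fun s => d ^ s - 1).sum ≤ d ^ ss.sum - 1 := sum_map_pow_sub_one_le hd ss
      _ ≤ d ^ branchScore ss - 1 := by
        have hs_le : s ≤ branchScore ss := (le_branchScore hs).trans' (Nat.le_add_right s _)
        have := Nat.pow_le_pow_right hd (hsum.trans hs_le)
        omega
  · push Not at hmax
    rcases eq_or_ne ss [] with rfl | hne
    · simp
    obtain ⟨s₀, hs₀⟩ := List.exists_mem_of_ne_nil ss hne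
    obtain ⟨S, hS⟩ : ∃ S, branchScore ss = S + 1 := by
      have := le_branchScore hs₀
      rw [if_pos (Nat.sub_pos_of_lt (hmax s₀ hs₀))] at this
      exact Nat.exists_eq_add_one.mpr (by omega)
    have hterm : ∀ x ∈ ss.map fun s => d ^ s - 1, x ≤ d ^ S - 1 := by
      simp only [List.mem_map]
      rintro _ ⟨s, hs, rfl⟩
      have := le_branchScore hs
      rw [if_pos (Nat.sub_pos_of_lt (hmax s hs)), hS] at this
      have := Nat.pow_le_pow_right hd (Nat.le_of_succ_le_succ this)
      omega
    calc (ss.map fun s => d ^ s - 1).sum ≤ ss.length • (d ^ S - 1) := by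
          simpa using List.sum_le_card_nsmul _ _ hterm
      _ ≤ d * (d ^ S - 1) := by rw [smul_eq_mul]; exact Nat.mul_le_mul_right _ hlen
      _ ≤ d ^ branchScore ss - 1 := by
        rw [hS, Nat.mul_sub_one, ← pow_succ']
        omega

theorem score_nil (c : α) (b : Option α) : score c (.node b []) = 0 := by
  rw [score]

theorem score_singleton (c : α) (b : Option α) (t : LTree α) :
    score c (.node b [t]) = score c t + if b = some c then 1 else 0 := by
  rw [score]

theorem score_cons_cons (c : α) (b : Option α) (t₁ t₂ : LTree α) (ts : List (LTree α)) :
    score c (.node b (t₁ :: t₂ :: ts)) = branchScore ((t₁ :: t₂ :: ts).map (score c)) := by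
  rw [score]
  · rw [List.attach_map_val (f := score c), List.attach_map_val
      (f := fun t => score c t + if 0 < ((t₁ :: t₂ :: ts).map (score c)).sum - score c t then 1 else 0)]
    simp only [branchScore, List.map_map]
    rfl
  all_goals simp

theorem countc_node (c : α) (b : Option α) (ts : List (LTree α)) :
    countc c (.node b ts) = (if b = some c then 1 else 0) + (ts.map (countc c)).sum := by
  rw [countc, List.attach_map_val (l := ts) (f := countc c)]

theorem countc_lt_pow_score {d : ℕ} (hd : 2 ≤ d) (c : α) {T : LTree α} (hdeg : DegLE d T)
    (hbr : BranchEps T) : countc c T < d ^ score c T := by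
  induction hdeg with
  | node b ts hlen _ ih =>
  obtain ⟨_, _, hlabel, hchildren⟩ := hbr
  have ih' : ∀ t ∈ ts, countc c t < d ^ score c t := fun t ht => ih t ht (hchildren t ht)
  match ts, hlen, hlabel, ih' with
  | [], _, hlabel, _ =>
    simp [score_nil, countc_node, hlabel]
  | [t], _, _, ih' =>
    have ht := ih' t (List.mem_singleton_self t)
    rw [score_singleton, countc_node]
    split_ifs
    · have := Nat.pow_lt_pow_right (a := d) (by omega) (Nat.lt_add_one (score c t))
      simp only [List.map_cons, List.map_nil, List.sum_cons, List.sum_nil]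
      omega
    · simpa using ht
  | t₁ :: t₂ :: ts, hlen, hlabel, ih' =>
    rw [score_cons_cons, countc_node, hlabel (by simp)]
    have hd' : 0 < d := by omega
    calc _ = ((t₁ :: t₂ :: ts).map (countc c)).sum := by simp
      _ ≤ (((t₁ :: t₂ :: ts).map (score c)).map fun s => d ^ s - 1).sum := by
        rw [List.map_map]
        exact List.sum_le_sum fun t ht => Nat.le_sub_one_of_lt (ih' t ht)
      _ ≤ d ^ branchScore ((t₁ :: t₂ :: ts).map (score c)) - 1 :=
        sum_map_pow_sub_one_le_branchScore hd' (by simpa using hlen)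
      _ < d ^ branchScore ((t₁ :: t₂ :: ts).map (score c)) :=
        Nat.sub_one_lt (pow_pos hd' _).ne'

end LTree

open LTree in
theorem stmt1 {α : Type} [DecidableEq α] {k : ℕ} (c : Fin k → α) (T : LTree α) (n : ℕ)
    (hdeg : DegLE (k + 1) T) (hbr : BranchEps T)
    (hcount : ∀ i : Fin k, n ≤ countc (c i) T) :
    ∀ i : Fin k, Real.logb (k + 1 : ℝ) (n : ℝ) ≤ (score (c i) T : ℝ) := by
  intro i
  have hk : 1 ≤ k := i.pos
  have hn : n < (k + 1) ^ score (c i) T :=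
    (hcount i).trans_lt (countc_lt_pow_score (by omega) (c i) hdeg hbr)
  rcases n.eq_zero_or_pos with rfl | hn₀
  · simp
  · rw [Real.logb_le_iff_le_rpow (by norm_cast; omega) (by positivity), Real.rpow_natCast]
    exact_mod_cast hn.le
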